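/- arXiv:1103.4460 — 3 statements merged into one kernel-verified Lean document; each statement's English description precedes it below -/
import Mathlib

section
/- Let V be a real symplectic vector space of dimension 2n with symplectic form ω. Then the Lefschetz map L : Λ^q V* → Λ^{q+2} V*, L(u) = ω ∧ u, is injective for all q ≤ n − 1. -/
/-!
An `sl₂` argument. Write `ω = ∑ Aᵢⱼ eᵢ ∧ eⱼ` (the symplectic form is the case where `A` is the
strictly upper triangular part of the Gram matrix, so that `A - Aᵀ` is the Gram matrix itself)
and let `Λ = ∑ Cₖₗ ιₖ ιₗ` with `C = (A - Aᵀ)⁻¹`, where `ιₖ` is the interior product with the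
`k`-th dual basis vector. Since `∑ₖ eₖ ∧ ιₖ` multiplies a `q`-form by `q`, the commutator
`[Λ, ω ∧ ·]` acts on `q`-forms as the scalar `2n - 2q`. If `ω ∧ u = 0` with `u` of degree
`q < n`, iterating gives `ω ∧ Λ^(m+1) u = -(m+1)(2n - 2q + 2m) Λ^m u`; these coefficients never
vanish and `Λ^m u = 0` once `2m > q`, so descending in `m` gives `u = 0`.
-/

open scoped Matrix

theorem Matrix.sum_smul_sum_smul {R M m n o : Type*} [Semiring R] [AddCommMonoid M] [Module R M]
    [Fintype n] [Fintype o] (C : Matrix m n R) (S : Matrix n o R) (v : o → M) (k : m) :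
    ∑ l, C k l • ∑ j, S l j • v j = ∑ j, (C * S) k j • v j := by
  simp_rw [Finset.smul_sum, smul_smul, Matrix.mul_apply, Finset.sum_smul]
  exact Finset.sum_comm

namespace ExteriorAlgebra

open CliffordAlgebra

section CommRing

variable {R N : Type*} [CommRing R] [AddCommGroup N] [Module R N]

theorem ι_mul_mem_exteriorPower_succ (x : N) {q : ℕ} {u : ExteriorAlgebra R N}
    (hu : u ∈ ⋀[R]^q N) : ι R x * u ∈ ⋀[R]^(q + 1) N := by
  rw [exteriorPower, pow_succ']
  exact Submodule.mul_mem_mul (LinearMap.mem_range_self _ x) hu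

theorem contractLeft_eq_zero_of_mem_exteriorPower_zero (d : Module.Dual R N)
    {u : ExteriorAlgebra R N} (hu : u ∈ ⋀[R]^0 N) : contractLeft (Q := 0) d u = 0 := by
  rw [exteriorPower, pow_zero] at hu
  obtain ⟨r, rfl⟩ := Submodule.mem_one.mp hu
  exact contractLeft_algebraMap 0 d r

theorem contractLeft_mem_exteriorPower (d : Module.Dual R N) {q : ℕ}
    {u : ExteriorAlgebra R N} (hu : u ∈ ⋀[R]^q N) :
    contractLeft (Q := 0) d u ∈ ⋀[R]^(q - 1) N := by
  induction q generalizing u with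
  | zero => simp [contractLeft_eq_zero_of_mem_exteriorPower_zero d hu]
  | succ q ih =>
    rw [exteriorPower, pow_succ'] at hu
    induction hu using Submodule.mul_induction_on' with
    | mem_mul_mem x hx v hv =>
      obtain ⟨x, rfl⟩ := hx
      rw [contractLeft_ι_mul]
      refine sub_mem (Submodule.smul_mem _ _ hv) ?_
      rcases q with _ | q
      · simp [contractLeft_eq_zero_of_mem_exteriorPower_zero d hv]
      · exact ι_mul_mem_exteriorPower_succ x (ih hv)
    | add v w _ _ hv hw => rw [map_add]; exact add_mem hv hw

variable {n : Type*} [Fintype n] (e : Module.Basis n R N)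

theorem sum_ι_mul_contractLeft_coord {q : ℕ} {u : ExteriorAlgebra R N} (hu : u ∈ ⋀[R]^q N) :
    ∑ k, ι R (e k) * contractLeft (Q := 0) (e.coord k) u = q • u := by
  induction hu using Submodule.pow_induction_on_left' with
  | algebraMap r => simp [contractLeft_algebraMap]
  | add v w q _ _ hv hw => simp only [map_add, mul_add, Finset.sum_add_distrib, hv, hw, smul_add]
  | mem_mul x hx q v _ hv =>
    obtain ⟨x, rfl⟩ := hx
    have hx : ∑ k, e.coord k x • (ι R (e k) * v) = ι R x * v := by
      simp_rw [← smul_mul_assoc, ← Finset.sum_mul, ← map_smul, ← map_sum,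
        Module.Basis.coord_apply, e.sum_repr]
    have hanti : ∀ k, ι R (e k) * ι R x = -(ι R x * ι R (e k)) := fun k =>
      eq_neg_of_add_eq_zero_left (ι_add_mul_swap _ _)
    simp only [contractLeft_ι_mul, mul_sub, mul_smul_comm, ← mul_assoc, hanti, neg_mul,
      sub_neg_eq_add, Finset.sum_add_distrib]
    simp_rw [hx, mul_assoc, ← Finset.mul_sum, hv, mul_smul_comm, succ_nsmul']

noncomputable def twoForm (A : Matrix n n R) : ExteriorAlgebra R N :=
  ∑ i, ∑ j, A i j • (ι R (e i) * ι R (e j))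

theorem contractLeft_coord_twoForm_mul (A : Matrix n n R) (l : n) (u : ExteriorAlgebra R N) :
    contractLeft (Q := 0) (e.coord l) (twoForm e A * u) =
      ι R (∑ j, (A - Aᵀ) l j • e j) * u + twoForm e A * contractLeft (Q := 0) (e.coord l) u := by
  classical
  have hterm : ∀ i j, contractLeft (Q := 0) (e.coord l) (ι R (e i) * (ι R (e j) * u)) =
      e.coord l (e i) • (ι R (e j) * u) - e.coord l (e j) • (ι R (e i) * u) +
        ι R (e i) * (ι R (e j) * contractLeft (Q := 0) (e.coord l) u) := fun i j => by
    rw [contractLeft_ι_mul, contractLeft_ι_mul, mul_sub, mul_smul_comm]; abel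
  have hcollapse : ∀ f : n → ExteriorAlgebra R N, ∑ i, e.coord l (e i) • f i = f l := fun f => by
    simp [Finsupp.single_apply]
  have hfirst : ∑ i, ∑ j, A i j • e.coord l (e i) • (ι R (e j) * u) =
      ∑ j, A l j • (ι R (e j) * u) := by
    simp_rw [smul_comm (A _ _), ← Finset.smul_sum, hcollapse]
  have hsecond : ∑ i, ∑ j, A i j • e.coord l (e j) • (ι R (e i) * u) =
      ∑ j, A j l • (ι R (e j) * u) := by
    rw [Finset.sum_comm]
    simp_rw [smul_comm (A _ _), ← Finset.smul_sum, hcollapse]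
  simp only [twoForm, Finset.sum_mul, smul_mul_assoc, mul_assoc, map_sum, map_smul, hterm,
    smul_add, smul_sub, Finset.sum_add_distrib, Finset.sum_sub_distrib, hfirst, hsecond]
  simp only [Matrix.sub_apply, Matrix.transpose_apply, sub_smul, Finset.sum_sub_distrib]

noncomputable def dualLefschetz (C : Matrix n n R) : Module.End R (ExteriorAlgebra R N) :=
  ∑ k, ∑ l, C k l • (contractLeft (Q := 0) (e.coord k) ∘ₗ contractLeft (Q := 0) (e.coord l))

theorem dualLefschetz_mem_exteriorPower (C : Matrix n n R) {q : ℕ} {u : ExteriorAlgebra R N}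
    (hu : u ∈ ⋀[R]^q N) : dualLefschetz e C u ∈ ⋀[R]^(q - 2) N := by
  simp only [dualLefschetz, LinearMap.sum_apply, LinearMap.smul_apply, LinearMap.comp_apply]
  refine Submodule.sum_mem _ fun k _ => Submodule.sum_mem _ fun l _ => Submodule.smul_mem _ _ ?_
  simpa [Nat.sub_sub] using contractLeft_mem_exteriorPower _ (contractLeft_mem_exteriorPower _ hu)

theorem dualLefschetz_eq_zero_of_mem_exteriorPower (C : Matrix n n R) {q : ℕ} (hq : q ≤ 1)
    {u : ExteriorAlgebra R N} (hu : u ∈ ⋀[R]^q N) : dualLefschetz e C u = 0 := by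
  simp only [dualLefschetz, LinearMap.sum_apply, LinearMap.smul_apply, LinearMap.comp_apply]
  refine Finset.sum_eq_zero fun k _ => Finset.sum_eq_zero fun l _ => ?_
  have hl := contractLeft_mem_exteriorPower (e.coord l) hu
  rw [show q - 1 = 0 by omega] at hl
  rw [contractLeft_eq_zero_of_mem_exteriorPower_zero _ hl, smul_zero]

theorem dualLefschetz_pow_mem_exteriorPower (C : Matrix n n R) {q : ℕ} {u : ExteriorAlgebra R N}
    (hu : u ∈ ⋀[R]^q N) (m : ℕ) : (dualLefschetz e C ^ m) u ∈ ⋀[R]^(q - 2 * m) N := by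
  induction m with
  | zero => simpa using hu
  | succ m ih =>
    rw [pow_succ', Module.End.mul_apply, show q - 2 * (m + 1) = q - 2 * m - 2 by omega]
    exact dualLefschetz_mem_exteriorPower e C ih

variable [DecidableEq n]

theorem dualLefschetz_twoForm_mul {A C : Matrix n n R}
    (hC : C * (A - Aᵀ) = 1) (hCt : Cᵀ * (A - Aᵀ) = -1) (u : ExteriorAlgebra R N) :
    dualLefschetz e C (twoForm e A * u) =
      twoForm e A * dualLefschetz e C u + Fintype.card n • u -
        2 • ∑ k, ι R (e k) * contractLeft (Q := 0) (e.coord k) u := by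
  set S := A - Aᵀ
  set y : n → N := fun l => ∑ j, S l j • e j
  set c : n → Module.End R (ExteriorAlgebra R N) := fun k => contractLeft (Q := 0) (e.coord k)
  have hpair : ∀ k l, c k (c l (twoForm e A * u)) =
      S l k • u - ι R (y l) * c k u + ι R (y k) * c l u + twoForm e A * c k (c l u) := fun k l => by
    simp only [c, y, contractLeft_coord_twoForm_mul, map_add, contractLeft_ι_mul,
      Module.Basis.coord_apply, e.repr_sum_self]
    abel
  have hrow : ∀ k, ∑ l, C k l • y l = e k := fun k => by
    simpa [hC, Matrix.one_apply] using Matrix.sum_smul_sum_smul C S e k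
  have hcol : ∀ l, ∑ k, C k l • y k = -e l := fun l => by
    simpa [hCt, Matrix.one_apply] using Matrix.sum_smul_sum_smul Cᵀ S e l
  have htrace : ∑ k, ∑ l, C k l * S l k = Fintype.card n := by
    simp_rw [← Matrix.mul_apply, hC, Matrix.one_apply_eq, Finset.sum_const, Finset.card_univ,
      nsmul_one]
  have hT1 : ∑ k, ∑ l, C k l • S l k • u = Fintype.card n • u := by
    simp_rw [smul_smul, ← Finset.sum_smul, htrace, Nat.cast_smul_eq_nsmul]
  have hT2 : ∑ k, ∑ l, C k l • (ι R (y l) * c k u) = ∑ k, ι R (e k) * c k u := by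
    simp_rw [← smul_mul_assoc, ← Finset.sum_mul, ← map_smul, ← map_sum, hrow]
  have hT3 : ∑ k, ∑ l, C k l • (ι R (y k) * c l u) = -∑ k, ι R (e k) * c k u := by
    rw [Finset.sum_comm]
    simp_rw [← smul_mul_assoc, ← Finset.sum_mul, ← map_smul, ← map_sum, hcol, map_neg, neg_mul,
      Finset.sum_neg_distrib]
  have hT4 : ∑ k, ∑ l, C k l • (twoForm e A * c k (c l u)) =
      twoForm e A * dualLefschetz e C u := by
    simp [dualLefschetz, Finset.mul_sum, c]
  calc dualLefschetz e C (twoForm e A * u)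
      = ∑ k, ∑ l, C k l • c k (c l (twoForm e A * u)) := by simp [dualLefschetz, c]
    _ = _ := by
      simp_rw [hpair, smul_add, smul_sub, Finset.sum_add_distrib, Finset.sum_sub_distrib, hT1, hT2,
        hT3, hT4]
      module

theorem twoForm_mul_dualLefschetz {A C : Matrix n n R} (hC : C * (A - Aᵀ) = 1)
    (hCt : Cᵀ * (A - Aᵀ) = -1) {q : ℕ} {u : ExteriorAlgebra R N} (hu : u ∈ ⋀[R]^q N) :
    twoForm e A * dualLefschetz e C u =
      dualLefschetz e C (twoForm e A * u) - ((Fintype.card n : ℤ) - 2 * q) • u := by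
  rw [dualLefschetz_twoForm_mul e hC hCt, sum_ι_mul_contractLeft_coord e hu]
  module

theorem twoForm_mul_dualLefschetz_pow_succ {A C : Matrix n n R} (hC : C * (A - Aᵀ) = 1)
    (hCt : Cᵀ * (A - Aᵀ) = -1) {q : ℕ} {u : ExteriorAlgebra R N} (hu : u ∈ ⋀[R]^q N)
    (hωu : twoForm e A * u = 0) {m : ℕ} (hm : 2 * m ≤ q) :
    twoForm e A * (dualLefschetz e C ^ (m + 1)) u =
      (-((m + 1) * (Fintype.card n - 2 * q + 2 * m) : ℤ)) • (dualLefschetz e C ^ m) u := by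
  induction m with
  | zero =>
    rw [pow_one, pow_zero, Module.End.one_apply, twoForm_mul_dualLefschetz e hC hCt hu, hωu,
      map_zero]
    module
  | succ m ih =>
    have hmem := dualLefschetz_pow_mem_exteriorPower e C hu (m + 1)
    rw [pow_succ' _ (m + 1), Module.End.mul_apply, twoForm_mul_dualLefschetz e hC hCt hmem,
      ih (by omega), map_zsmul, Nat.cast_sub hm, ← Module.End.mul_apply, ← pow_succ']
    push_cast
    module

end CommRing

section Field

variable {K N : Type*} [Field K] [CharZero K] [AddCommGroup N] [Module K N]
  {n : Type*} [Fintype n] [DecidableEq n] (e : Module.Basis n K N)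

theorem eq_zero_of_twoForm_mul_eq_zero {A : Matrix n n K} (hA : (A - Aᵀ).det ≠ 0) {q : ℕ}
    (hq : 2 * q < Fintype.card n) {u : ExteriorAlgebra K N} (hu : u ∈ ⋀[K]^q N)
    (hωu : twoForm e A * u = 0) : u = 0 := by
  set S := A - Aᵀ
  have hS : IsUnit S.det := isUnit_iff_ne_zero.mpr hA
  have hC : S⁻¹ * S = 1 := Matrix.nonsing_inv_mul S hS
  have hCt : S⁻¹ᵀ * S = -1 := calc
    S⁻¹ᵀ * S = -(S * S⁻¹)ᵀ := by
      rw [Matrix.transpose_mul, show Sᵀ = -S by simp [S], Matrix.mul_neg, neg_neg]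
    _ = -1 := by rw [Matrix.mul_nonsing_inv S hS, Matrix.transpose_one]
  set Λ := dualLefschetz e S⁻¹
  have hstep : ∀ m, 2 * m ≤ q → (Λ ^ (m + 1)) u = 0 → (Λ ^ m) u = 0 := by
    intro m hm h
    have hchain := twoForm_mul_dualLefschetz_pow_succ e hC hCt hu hωu hm
    rw [h, mul_zero, eq_comm, ← Int.cast_smul_eq_zsmul K, smul_eq_zero] at hchain
    exact hchain.resolve_left <|
      Int.cast_ne_zero.mpr <| neg_ne_zero.mpr <| mul_ne_zero (by omega) (by omega)
  have htop : (Λ ^ (q / 2 + 1)) u = 0 := by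
    rw [pow_succ', Module.End.mul_apply]
    exact dualLefschetz_eq_zero_of_mem_exteriorPower e _ (by omega)
      (dualLefschetz_pow_mem_exteriorPower e _ hu _)
  simpa using Nat.decreasingInduction (motive := fun m _ => (Λ ^ m) u = 0)
    (fun m hm => hstep m (by omega)) htop (Nat.zero_le _)

end Field

end ExteriorAlgebra

theorem Matrix.of_ite_lt_sub_transpose {n R : Type*} [LinearOrder n] [AddGroup R]
    {M : Matrix n n R} (hM : ∀ i j, M j i = -M i j) (hdiag : ∀ i, M i i = 0) :
    Matrix.of (fun i j => if i < j then M i j else 0) -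
      (Matrix.of fun i j => if i < j then M i j else 0)ᵀ = M := by
  ext i j
  rcases lt_trichotomy i j with h | rfl | h
  · simp [h, h.not_gt]
  · simp [hdiag]
  · simp [h, h.not_gt, hM i j]

/-- Let `V` be a real symplectic vector space of dimension `2n` with
symplectic form `ω` (a nondegenerate alternating bilinear form `B`, represented in the
exterior algebra of `V*` by `ω = ∑_{i<j} B(e_i, e_j) e^i ∧ e^j` for a basis `e`).
Then the Lefschetz map `L : Λ^q V* → Λ^{q+2} V*`, `L(u) = ω ∧ u`, is injective for all
`q ≤ n − 1`. -/
theorem stmt10 (V : Type*) [AddCommGroup V] [Module ℝ V] (n : ℕ) (hn : 0 < n)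
    (b : Module.Basis (Fin (2 * n)) ℝ V)
    (B : V →ₗ[ℝ] V →ₗ[ℝ] ℝ)
    (halt : ∀ v : V, B v v = 0)
    (hnd : ∀ v : V, (∀ u : V, B v u = 0) → v = 0)
    (q : ℕ) (hq : q ≤ n - 1) :
    ∀ u ∈ ⋀[ℝ]^q (Module.Dual ℝ V),
      (∑ i : Fin (2 * n), ∑ j : Fin (2 * n),
          if i < j then
            B (b i) (b j) •
              (ExteriorAlgebra.ι ℝ (b.coord i) * ExteriorAlgebra.ι ℝ (b.coord j))
          else 0) * u = 0 → u = 0 := by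
  intro u hu h0
  set G := LinearMap.toMatrix₂ b b B
  have hG : G.det ≠ 0 := (LinearMap.separatingLeft_iff_det_ne_zero b).mp hnd
  have hAG := Matrix.of_ite_lt_sub_transpose (M := G)
    (fun i j => by simpa [G] using (LinearMap.IsAlt.neg halt (b i) (b j)).symm)
    (fun i => by simp [G, halt])
  refine ExteriorAlgebra.eq_zero_of_twoForm_mul_eq_zero b.dualBasis (hAG ▸ hG)
    (by simp; omega) hu ?_
  simpa [ExteriorAlgebra.twoForm, G, ite_smul] using h0
end

section
/- Let 𝔫₂ be a real vector space with basis v₁, ..., v_{𝔡−1} and suppose δv₁, ..., δv_{𝔡−1} are linearly independent elements of Λ²𝔫₁*. For a subset I ⊆ {1,...,𝔡−1} of size k−1 set v_I = ⋀_{i∈I} v_i. Then the map v_I ↦ Σ_{i∈I} ± δv_i ⊗ v_{I∖{i}} is injective on Λ^{k−1}𝔫₂*, i.e., δ is injective on Λ^{k−1}𝔫₂* for 2 ≤ k ≤ 𝔡. -/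
open Finset

theorem coeff_insert_eq_zero_of_signed_sum_eq_zero {ι R E : Type*} [Fintype ι] [LinearOrder ι]
    [Ring R] [AddCommGroup E] [Module R E] {w : ι → E} (hw : LinearIndependent R w)
    {c : Finset ι → R} {J : Finset ι}
    (h : ∑ i ∈ Jᶜ, ((-1 : R) ^ (J.filter (fun j => j < i)).card * c (insert i J)) • w i = 0)
    {i : ι} (hi : i ∉ J) : c (insert i J) = 0 := by
  have hcoef := linearIndependent_iff'.mp hw Jᶜ _ h i (mem_compl.mpr hi)
  exact ((isUnit_neg_one (α := R)).pow _).mul_right_eq_zero.mp hcoef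

theorem stmt11_general (E : Type*) [AddCommGroup E] [Module ℝ E]
    (d k : ℕ) (hk2 : 2 ≤ k)
    (w : Fin (d - 1) → E) (hw : LinearIndependent ℝ w)
    (c : Finset (Fin (d - 1)) → ℝ)
    (hδ : ∀ J : Finset (Fin (d - 1)), J.card = k - 2 →
      ∑ i ∈ Jᶜ,
        ((-1 : ℝ) ^ (J.filter (fun j => j < i)).card * c (insert i J)) • w i = 0) :
    ∀ I : Finset (Fin (d - 1)), I.card = k - 1 → c I = 0 := by
  intro I hI
  obtain ⟨i, hi⟩ : I.Nonempty := by
    rw [← card_pos, hI]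
    omega
  have hJ : (I.erase i).card = k - 2 := by
    rw [card_erase_of_mem hi, hI]
    omega
  rw [← insert_erase hi]
  exact coeff_insert_eq_zero_of_signed_sum_eq_zero hw (hδ _ hJ) (notMem_erase i I)

/-- Let `𝔫₂*` have basis `v₁, …, v_{𝔡−1}` and suppose the 2-forms
`δv₁, …, δv_{𝔡−1}` (here `w i ∈ E := Λ²𝔫₁*`) are linearly independent. In the basis
`(v_I)` of `Λ^{k−1}𝔫₂*` indexed by `(k−1)`-subsets `I`, the Chevalley–Eilenberg
differential sends `v_I` to `∑_{i∈I} ± δv_i ⊗ v_{I∖{i}}`; this map is injective on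
`Λ^{k−1}𝔫₂*` for `2 ≤ k ≤ 𝔡`: if the element with coordinates `c` is sent to `0`
(i.e. for every `(k−2)`-subset `J` the coefficient of `v_J`, namely
`∑_{i∉J} (−1)^{#{j∈J | j<i}} c(J∪{i}) δv_i`, vanishes), then all coordinates `c I`
with `#I = k−1` vanish. -/
theorem stmt11 (E : Type*) [AddCommGroup E] [Module ℝ E]
    (d k : ℕ) (hk2 : 2 ≤ k) (hkd : k ≤ d)
    (w : Fin (d - 1) → E) (hw : LinearIndependent ℝ w)
    (c : Finset (Fin (d - 1)) → ℝ)
    (hδ : ∀ J : Finset (Fin (d - 1)), J.card = k - 2 →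
      ∑ i ∈ Jᶜ,
        ((-1 : ℝ) ^ (J.filter (fun j => j < i)).card * c (insert i J)) • w i = 0) :
    ∀ I : Finset (Fin (d - 1)), I.card = k - 1 → c I = 0 :=
  stmt11_general E d k hk2 w hw c hδ
end

section
/- Let G be a Lie group with a left-invariant metric and ξ a left-invariant unit vector field with tr(ad_ξ) = h. If h/p is not the real part of any eigenvalue of Λ^k ad_ξ^⊤ on Λ^k ξ^⊥, then the splitting of Λ^k ξ^⊥ into the sum of characteristic subspaces with eigenvalue real parts w satisfying h − pw > 0 (resp. < 0) gives, for some η > 0 and constant C, the estimate |(φ_t)^* ω|^p ≤ C e^{−ηt} Jac(φ_t) |ω|^p for all t ≥ 0 and ω in the plus subspace (and analogously for t ≤ 0 on the minus subspace); i.e., ξ is (k,p)-Anosov. -/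
/-!
On `ker q(A)`, where every complex root of `q` has real part `< ν`, one has
`‖exp(tA) x‖ ≤ K e^{νt} ‖x‖`: after complexifying, `q` splits into linear factors, and one
peels them off one at a time, each step being the variation-of-constants formula for
`e^{-zt} exp(tA) x`, whose derivative is `e^{-zt} exp(tA) (A - z) x`. Splitting the roots of the
characteristic polynomial by the sign of `Re z - h/p` gives a real factorisation `χ = q₁ q₂`
into coprime factors, hence `V = ker q₁(A) ⊕ ker q₂(A)`, and the bound (for `A` on the first
summand, for `-A` on the second) raised to the power `p` is the Anosov estimate.
-/

open Polynomial NormedSpace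

universe u

theorem exists_map_eq_prod_X_sub_C_filter {s : Multiset ℂ} (hs : s.map (starRingEnd ℂ) = s)
    (P : ℂ → Prop) [DecidablePred P] (hP : ∀ z, P (starRingEnd ℂ z) ↔ P z) :
    ∃ p : ℝ[X], p.map (algebraMap ℝ ℂ) = ((s.filter P).map fun z => X - C z).prod := by
  rw [← mem_lifts, lifts_iff_coeff_lifts]
  intro n
  have hconj : ((s.filter P).map (starRingEnd ℂ)) = s.filter P := by
    conv_rhs => rw [← hs]
    rw [Multiset.filter_map]
    congr 1
    exact Multiset.filter_congr fun z _ => (hP z).symm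
  have hfix : (((s.filter P).map fun z => X - C z).prod).map (starRingEnd ℂ) =
      ((s.filter P).map fun z => X - C z).prod := by
    conv_rhs => rw [← hconj]
    simp [Polynomial.map_multiset_prod, Multiset.map_map]
  obtain ⟨r, hr⟩ := Complex.conj_eq_iff_real.1 (by simpa using congrArg (coeff · n) hfix)
  exact ⟨r, hr.symm⟩

theorem map_conj_roots_map_ofReal (q : ℝ[X]) :
    (q.map (algebraMap ℝ ℂ)).roots.map (starRingEnd ℂ) = (q.map (algebraMap ℝ ℂ)).roots := by
  rw [roots_map_of_injective_of_card_eq_natDegree (starRingEnd ℂ).injective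
    IsAlgClosed.card_roots_eq_natDegree, map_map]
  congr 2
  ext r
  simp

theorem mem_of_isRoot_prod_X_sub_C {R : Type*} [CommRing R] [IsDomain R] {s : Multiset R}
    {z : R} (h : ((s.map fun w => X - C w).prod).IsRoot z) : z ∈ s := by
  rw [← roots_multiset_prod_X_sub_C s]
  exact (mem_roots (monic_multiset_prod_of_monic _ _ fun w _ => monic_X_sub_C w).ne_zero).2 h

theorem exists_lt_forall_roots_re_lt {q : ℂ[X]} (hq : q ≠ 0) {c : ℝ}
    (hroots : ∀ z, q.IsRoot z → z.re < c) : ∃ ν < c, ∀ z, q.IsRoot z → z.re < ν := by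
  have : ∀ᶠ ν in nhdsWithin c (Set.Iio c), ∀ z ∈ q.roots.toFinset, z.re < ν :=
    (Filter.eventually_all_finset _).2 fun z hz => nhdsWithin_le_nhds <|
      eventually_gt_nhds (hroots z (isRoot_of_mem_roots (Multiset.mem_toFinset.1 hz)))
  obtain ⟨ν, hν, hνc⟩ := (this.and self_mem_nhdsWithin).exists
  exact ⟨ν, hνc, fun z hz => hν z (by simpa [hq] using hz)⟩

theorem exists_eq_mul_of_roots_re_ne {q : ℝ[X]} (hq : q ≠ 0) {c : ℝ}
    (hc : ∀ z : ℂ, (q.map (algebraMap ℝ ℂ)).IsRoot z → z.re ≠ c) :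
    ∃ q₁ q₂ : ℝ[X], q = q₁ * q₂ ∧
      (∀ z : ℂ, (q₁.map (algebraMap ℝ ℂ)).IsRoot z → z.re < c) ∧
      (∀ z : ℂ, (q₂.map (algebraMap ℝ ℂ)).IsRoot z → c < z.re) := by
  classical
  obtain ⟨q₁, hq₁⟩ := exists_map_eq_prod_X_sub_C_filter (map_conj_roots_map_ofReal q)
    (fun z => z.re < c) fun z => by simp
  obtain ⟨q₂, hq₂⟩ := exists_map_eq_prod_X_sub_C_filter (map_conj_roots_map_ofReal q)
    (fun z => ¬z.re < c) fun z => by simp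
  refine ⟨q₁, C q.leadingCoeff * q₂, map_injective _ (algebraMap ℝ ℂ).injective ?_,
    fun z hz => ?_, fun z hz => ?_⟩
  · rw [← C_leadingCoeff_mul_prod_multiset_X_sub_C
      (IsAlgClosed.card_roots_eq_natDegree (p := q.map (algebraMap ℝ ℂ))),
      ← Multiset.filter_add_not (fun z => z.re < c) (q.map (algebraMap ℝ ℂ)).roots,
      Multiset.map_add, Multiset.prod_add, Polynomial.map_mul, Polynomial.map_mul, hq₁, hq₂,
      leadingCoeff_map, map_C]
    ring
  · rw [hq₁] at hz
    exact (Multiset.mem_filter.1 (mem_of_isRoot_prod_X_sub_C hz)).2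
  · rw [Polynomial.map_mul, map_C, hq₂, IsRoot, eval_mul, eval_C, mul_eq_zero] at hz
    obtain ⟨hzs, hzc⟩ := Multiset.mem_filter.1 (mem_of_isRoot_prod_X_sub_C
      (hz.resolve_left (by simpa using hq)))
    exact lt_of_le_of_ne (not_lt.1 hzc) (hc z (isRoot_of_mem_roots hzs)).symm

theorem isCoprime_of_roots_re_lt_of_lt_roots_re {q₁ q₂ : ℝ[X]} {c : ℝ}
    (h₁ : ∀ z : ℂ, (q₁.map (algebraMap ℝ ℂ)).IsRoot z → z.re < c)
    (h₂ : ∀ z : ℂ, (q₂.map (algebraMap ℝ ℂ)).IsRoot z → c < z.re) : IsCoprime q₁ q₂ := by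
  rw [isCoprime_iff_aeval_ne_zero_of_isAlgClosed ℝ ℂ]
  intro z
  by_contra! h
  simp only [aeval_def, eval₂_eq_eval_map] at h
  exact lt_asymm (h₁ z h.1) (h₂ z h.2)

theorem apply_mem_ker_aeval {R M : Type*} [CommRing R] [AddCommGroup M] [Module R M]
    (f : M →ₗ[R] M) (q : R[X]) {x : M} (hx : x ∈ LinearMap.ker (aeval f q)) :
    f x ∈ LinearMap.ker (aeval f q) := by
  rw [LinearMap.mem_ker] at hx ⊢
  have hcomm : Commute f (aeval f q) := by simpa using (commute_X q).map (aeval f)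
  rw [← Module.End.mul_apply, ← hcomm.eq, Module.End.mul_apply, hx, map_zero]

theorem isCompl_ker_aeval_of_isCoprime {R M : Type*} [CommRing R] [AddCommGroup M] [Module R M]
    (f : M →ₗ[R] M) {p q : R[X]} (hpq : IsCoprime p q) (h : aeval f (p * q) = 0) :
    IsCompl (LinearMap.ker (aeval f p)) (LinearMap.ker (aeval f q)) :=
  ⟨disjoint_ker_aeval_of_isCoprime f hpq, codisjoint_iff.2 <| by
    rw [sup_ker_aeval_eq_ker_aeval_mul_of_coprime f hpq, h, LinearMap.ker_zero]⟩

theorem aeval_neg_comp_neg_X {R A : Type*} [CommRing R] [Ring A] [Algebra R A] (a : A)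
    (q : R[X]) : aeval (-a) (q.comp (-X)) = aeval a q := by
  rw [aeval_comp, map_neg, aeval_X, neg_neg]

theorem isRoot_map_comp_neg_X {R S : Type*} [CommRing R] [CommRing S] (f : R →+* S) {q : R[X]}
    {z : S} : ((q.comp (-X)).map f).IsRoot z ↔ (q.map f).IsRoot (-z) := by
  simp [IsRoot, Polynomial.map_comp]

theorem ContinuousLinearMap.coe_aeval {R M : Type*} [CommRing R] [TopologicalSpace M]
    [AddCommGroup M] [Module R M] [IsTopologicalAddGroup M] [ContinuousConstSMul R M]
    (A : M →L[R] M) (q : R[X]) :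
    ((aeval A q : M →L[R] M) : M →ₗ[R] M) = aeval (A : M →ₗ[R] M) q :=
  (aeval_algHom_apply
    ({ ContinuousLinearMap.toLinearMapRingHom with commutes' := fun _ => rfl } :
      (M →L[R] M) →ₐ[R] (M →ₗ[R] M)) A q).symm

section ComplexGrowth

variable {U : Type*} [NormedAddCommGroup U] [NormedSpace ℂ U] [CompleteSpace U]

theorem hasDerivAt_exp_smul_apply (B : U →L[ℂ] U) (x : U) (t : ℝ) :
    HasDerivAt (fun u : ℝ => exp (u • B) x) (exp (t • B) (B x)) t :=
  ((ContinuousLinearMap.apply ℂ U x).restrictScalars ℝ).hasFDerivAt.comp_hasDerivAt t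
    (hasDerivAt_exp_smul_const (𝕂 := ℝ) B t)

theorem norm_cexp_neg_mul (z : ℂ) (u : ℝ) :
    ‖Complex.exp (-(u * z))‖ = Real.exp (-(u * z.re)) := by
  simp [Complex.norm_exp]

theorem hasDerivAt_cexp_neg_smul_exp_smul_apply (B : U →L[ℂ] U) (z : ℂ) (x : U) (u : ℝ) :
    HasDerivAt (fun u : ℝ => Complex.exp (-(u * z)) • exp (u • B) x)
      (Complex.exp (-(u * z)) • exp (u • B) (B x - z • x)) u := by
  have hexp : HasDerivAt (fun u : ℝ => Complex.exp (-(u * z)))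
      (Complex.exp (-(u * z)) * -z) u := by
    simpa using ((Complex.ofRealCLM.hasDerivAt (x := u)).mul_const z).neg.cexp
  refine (hexp.smul (hasDerivAt_exp_smul_apply B x u)).congr_deriv ?_
  rw [map_sub, map_smul]
  module

theorem norm_cexp_neg_smul_exp_smul_apply_le (B : U →L[ℂ] U) {z : ℂ} {ν K : ℝ} (hz : z.re < ν)
    (hK : 0 ≤ K) (x : U)
    (hy : ∀ t : ℝ, 0 ≤ t → ‖exp (t • B) (B x - z • x)‖ ≤ K * Real.exp (ν * t) * ‖B x - z • x‖)
    {t : ℝ} (ht : 0 ≤ t) :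
    ‖Complex.exp (-(t * z)) • exp (t • B) x‖ ≤
      ‖x‖ + K * ‖B x - z • x‖ / (ν - z.re) * Real.exp ((ν - z.re) * t) := by
  set y := B x - z • x
  have hδ : 0 < ν - z.re := sub_pos.2 hz
  have hF' (u : ℝ) (hu : 0 ≤ u) : ‖Complex.exp (-(u * z)) • exp (u • B) y‖ ≤
      K * ‖y‖ * Real.exp ((ν - z.re) * u) := by
    rw [norm_smul, norm_cexp_neg_mul]
    calc Real.exp (-(u * z.re)) * ‖exp (u • B) y‖
        ≤ Real.exp (-(u * z.re)) * (K * Real.exp (ν * u) * ‖y‖) := by gcongr; exact hy u hu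
      _ = K * ‖y‖ * Real.exp ((ν - z.re) * u) := by
        rw [show (ν - z.re) * u = -(u * z.re) + ν * u by ring, Real.exp_add]; ring
  refine image_norm_le_of_norm_deriv_right_le_deriv_boundary
    (B := fun u => ‖x‖ + K * ‖y‖ / (ν - z.re) * Real.exp ((ν - z.re) * u))
    (fun u _ => (hasDerivAt_cexp_neg_smul_exp_smul_apply B z x u).continuousAt.continuousWithinAt)
    (fun u _ => (hasDerivAt_cexp_neg_smul_exp_smul_apply B z x u).hasDerivWithinAt) ?_
    (fun u => ?_) (fun u hu => hF' u hu.1) ⟨ht, le_rfl⟩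
  · simp
    positivity
  · refine ((((hasDerivAt_id' u).const_mul (ν - z.re)).exp.const_mul
      (K * ‖y‖ / (ν - z.re))).const_add ‖x‖).congr_deriv ?_
    field_simp

theorem norm_exp_smul_apply_le_of_sub_smul (B : U →L[ℂ] U) {z : ℂ} {ν K : ℝ} (hz : z.re < ν)
    (hK : 0 ≤ K) (x : U)
    (hy : ∀ t : ℝ, 0 ≤ t → ‖exp (t • B) (B x - z • x)‖ ≤ K * Real.exp (ν * t) * ‖B x - z • x‖)
    (t : ℝ) (ht : 0 ≤ t) :
    ‖exp (t • B) x‖ ≤ (1 + K * (‖B‖ + ‖z‖) / (ν - z.re)) * Real.exp (ν * t) * ‖x‖ := by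
  have hδ : 0 < ν - z.re := sub_pos.2 hz
  have hyx : ‖B x - z • x‖ ≤ (‖B‖ + ‖z‖) * ‖x‖ := by
    calc ‖B x - z • x‖ ≤ ‖B x‖ + ‖z • x‖ := norm_sub_le _ _
      _ ≤ ‖B‖ * ‖x‖ + ‖z‖ * ‖x‖ := by rw [norm_smul]; gcongr; exact B.le_opNorm x
      _ = _ := by ring
  have hnorm : ‖exp (t • B) x‖ =
      Real.exp (t * z.re) * ‖Complex.exp (-(t * z)) • exp (t • B) x‖ := by
    rw [norm_smul, norm_cexp_neg_mul, ← mul_assoc, ← Real.exp_add]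
    simp
  have hexp_le : Real.exp (t * z.re) ≤ Real.exp (ν * t) := Real.exp_le_exp.2 (by nlinarith)
  have hexp_add : Real.exp (t * z.re) * Real.exp ((ν - z.re) * t) = Real.exp (ν * t) := by
    rw [← Real.exp_add]; ring_nf
  calc ‖exp (t • B) x‖
      ≤ Real.exp (t * z.re) *
          (‖x‖ + K * ‖B x - z • x‖ / (ν - z.re) * Real.exp ((ν - z.re) * t)) := by
        rw [hnorm]; gcongr; exact norm_cexp_neg_smul_exp_smul_apply_le B hz hK x hy ht
    _ = Real.exp (t * z.re) * ‖x‖ + K * ‖B x - z • x‖ / (ν - z.re) * Real.exp (ν * t) := by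
      rw [← hexp_add]; ring
    _ ≤ Real.exp (ν * t) * ‖x‖ + K * ((‖B‖ + ‖z‖) * ‖x‖) / (ν - z.re) * Real.exp (ν * t) := by
      gcongr
    _ = _ := by ring

theorem exists_norm_exp_smul_apply_le_of_aeval_prod_eq_zero (B : U →L[ℂ] U) {ν : ℝ}
    (s : Multiset ℂ) (hs : ∀ z ∈ s, z.re < ν) :
    ∃ K, 0 ≤ K ∧ ∀ x, aeval B (s.map fun z => X - C z).prod x = 0 →
      ∀ t : ℝ, 0 ≤ t → ‖exp (t • B) x‖ ≤ K * Real.exp (ν * t) * ‖x‖ := by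
  induction s using Multiset.induction_on with
  | empty => exact ⟨0, le_rfl, fun x hx => by simp_all⟩
  | cons z s ih =>
    obtain ⟨K, hK, hKs⟩ := ih fun w hw => hs w (Multiset.mem_cons_of_mem hw)
    have hz := hs z (Multiset.mem_cons_self z s)
    refine ⟨_, by have := sub_pos.2 hz; positivity, fun x hx =>
      norm_exp_smul_apply_le_of_sub_smul B hz hK x (hKs _ ?_)⟩
    rw [Multiset.map_cons, Multiset.prod_cons, mul_comm, map_mul, mul_apply_eq_comp] at hx
    simpa using hx

theorem exists_norm_exp_smul_apply_le_of_aeval_eq_zero (B : U →L[ℂ] U) {q : ℂ[X]} (hq : q ≠ 0)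
    {ν : ℝ} (hroots : ∀ z, q.IsRoot z → z.re < ν) :
    ∃ K, ∀ x, aeval B q x = 0 →
      ∀ t : ℝ, 0 ≤ t → ‖exp (t • B) x‖ ≤ K * Real.exp (ν * t) * ‖x‖ := by
  obtain ⟨K, -, hK⟩ := exists_norm_exp_smul_apply_le_of_aeval_prod_eq_zero B q.roots
    fun z hz => hroots z (isRoot_of_mem_roots hz)
  refine ⟨K, fun x hx => hK x ?_⟩
  rw [← C_leadingCoeff_mul_prod_multiset_X_sub_C (IsAlgClosed.card_roots_eq_natDegree (p := q)),
    map_mul, aeval_C, mul_apply_eq_comp] at hx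
  simpa [hq] using hx

end ComplexGrowth

/-- The complexification `ℂ ⊗ V` is realised as the space of real-linear maps `V' → ℂ` on the
dual `V'`, into which `V` embeds by evaluation; `T` acts by precomposition with its transpose. -/
theorem exists_complexification (V : Type u) [NormedAddCommGroup V] [NormedSpace ℝ V] :
    ∃ (U : Type u) (_ : NormedAddCommGroup U) (_ : NormedSpace ℂ U) (_ : CompleteSpace U)
      (ι : V →ₗᵢ[ℝ] U) (Ψ : (V →L[ℝ] V) →ₐ[ℝ] (U →L[ℂ] U)), ∀ T x, Ψ T (ι x) = ι (T x) := by
  refine ⟨StrongDual ℝ V →L[ℝ] ℂ, inferInstance, inferInstance, inferInstance,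
    Complex.ofRealLI.postcomp.comp (inclusionInDoubleDualLi ℝ),
    { toFun T := LinearMap.mkContinuous
        { toFun := fun Φ => Φ.comp ((ContinuousLinearMap.compL ℝ V V ℝ).flip T)
          map_add' := fun _ _ => rfl
          map_smul' := fun _ _ => rfl } ‖(ContinuousLinearMap.compL ℝ V V ℝ).flip T‖
        fun Φ => (Φ.opNorm_comp_le _).trans_eq (mul_comm _ _)
      map_one' := rfl
      map_mul' _ _ := rfl
      map_zero' := ?_
      map_add' := ?_
      commutes' := ?_ }, fun T x => rfl⟩
  · ext Φ φ; simp
  · intro S T; ext Φ φ; simp; rfl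
  · intro r; ext Φ φ; simp [Algebra.algebraMap_eq_smul_one]; exact Or.inl rfl

section RealGrowth

variable {V : Type*} [NormedAddCommGroup V] [NormedSpace ℝ V] [FiniteDimensional ℝ V]

theorem exists_norm_exp_smul_apply_le_of_roots_re_lt (A : V →L[ℝ] V) {q : ℝ[X]} (hq : q ≠ 0)
    {c : ℝ} (hroots : ∀ z : ℂ, (q.map (algebraMap ℝ ℂ)).IsRoot z → z.re < c) :
    ∃ ν < c, ∃ K, ∀ x ∈ LinearMap.ker (aeval (A : V →ₗ[ℝ] V) q), ∀ t : ℝ, 0 ≤ t →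
      ‖exp (t • A) x‖ ≤ K * Real.exp (ν * t) * ‖x‖ := by
  obtain ⟨U, _, _, _, ι, Ψ, hΨ⟩ := exists_complexification V
  have hqℂ : q.map (algebraMap ℝ ℂ) ≠ 0 :=
    (Polynomial.map_ne_zero_iff (algebraMap ℝ ℂ).injective).2 hq
  obtain ⟨ν, hνc, hν⟩ := exists_lt_forall_roots_re_lt hqℂ hroots
  obtain ⟨K, hK⟩ := exists_norm_exp_smul_apply_le_of_aeval_eq_zero (Ψ A) hqℂ hν
  refine ⟨ν, hνc, K, fun x hx t ht => ?_⟩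
  have hΨexp : Ψ (exp (t • A)) = exp (t • Ψ A) := by
    rw [← map_smul]
    exact map_exp_of_mem_ball (𝕂 := ℝ) Ψ Ψ.toLinearMap.continuous_of_finiteDimensional _ <|
      (expSeries_radius_eq_top ℝ (V →L[ℝ] V)).symm ▸ edist_lt_top _ _
  have hιx : aeval (Ψ A) (q.map (algebraMap ℝ ℂ)) (ι x) = 0 := by
    rw [aeval_map_algebraMap, aeval_algHom_apply, hΨ, ← ContinuousLinearMap.coe_coe (aeval A q),
      ContinuousLinearMap.coe_aeval, LinearMap.mem_ker.1 hx, map_zero]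
  calc ‖exp (t • A) x‖ = ‖exp (t • Ψ A) (ι x)‖ := by rw [← hΨexp, hΨ, ι.norm_map]
    _ ≤ K * Real.exp (ν * t) * ‖x‖ := by simpa using hK _ hιx t ht

theorem exists_norm_exp_neg_smul_apply_le_of_lt_roots_re (A : V →L[ℝ] V) {q : ℝ[X]}
    (hq : q ≠ 0) {c : ℝ} (hroots : ∀ z : ℂ, (q.map (algebraMap ℝ ℂ)).IsRoot z → c < z.re) :
    ∃ ν < -c, ∃ K, ∀ x ∈ LinearMap.ker (aeval (A : V →ₗ[ℝ] V) q), ∀ t : ℝ, 0 ≤ t →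
      ‖exp (-t • A) x‖ ≤ K * Real.exp (ν * t) * ‖x‖ := by
  have hq' : q.comp (-X) ≠ 0 := fun h0 => hq <| by
    simpa [comp_assoc] using congrArg (·.comp (-X : ℝ[X])) h0
  obtain ⟨ν, hνc, K, hK⟩ := exists_norm_exp_smul_apply_le_of_roots_re_lt (-A) hq'
    fun z hz => by simpa using neg_lt_neg (hroots (-z) ((isRoot_map_comp_neg_X _).1 hz))
  refine ⟨ν, hνc, K, fun x hx t ht => ?_⟩
  rw [neg_smul, ← smul_neg]
  refine hK x ?_ t ht
  rwa [ContinuousLinearMap.toLinearMap_neg, LinearMap.mem_ker, aeval_neg_comp_neg_X]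

end RealGrowth

theorem rpow_le_mul_exp_mul_exp {a b K ν p h η t : ℝ} (ha : 0 ≤ a) (hb : 0 ≤ b) (hK : 0 ≤ K)
    (hp : 0 ≤ p) (ht : 0 ≤ t) (hη : p * ν ≤ h - η) (hab : a ≤ K * Real.exp (ν * t) * b) :
    a ^ p ≤ K ^ p * Real.exp (-η * t) * Real.exp (h * t) * b ^ p := by
  calc a ^ p ≤ (K * Real.exp (ν * t) * b) ^ p := Real.rpow_le_rpow ha hab hp
    _ = K ^ p * Real.exp (p * ν * t) * b ^ p := by
      rw [Real.mul_rpow (by positivity) hb, Real.mul_rpow hK (Real.exp_nonneg _),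
        ← Real.exp_mul]
      ring_nf
    _ ≤ K ^ p * Real.exp ((h - η) * t) * b ^ p := by gcongr
    _ = _ := by rw [show (h - η) * t = -η * t + h * t by ring, Real.exp_add]; ring

/-- Let `G` be a Lie group with left-invariant metric, `ξ` a left-invariant
unit field with `h = tr ad_ξ`, so that the flow `φ_t` has Jacobian `e^{ht}` and acts on
`k`-forms transverse to `ξ` through `exp(t A)` with `A = Λ^k ad_ξ^⊤` acting on the
finite-dimensional space `V = Λ^k ξ^⊥`. If `h/p` is not the real part of any eigenvalue
of `A`, then `V` splits into two complementary `A`-invariant subspaces (sums of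
characteristic subspaces with `h − p·Re(w) > 0`, resp. `< 0`) on which, for some
`C, η > 0`, one has `‖exp(tA) x‖^p ≤ C e^{−ηt} Jac(φ_t) ‖x‖^p` for `t ≥ 0` on the plus
subspace, and the analogous estimate for `φ_{−t}` on the minus subspace; i.e. `ξ` is
`(k,p)`-Anosov. -/
theorem stmt16 (V : Type*) [NormedAddCommGroup V] [NormedSpace ℝ V]
    [FiniteDimensional ℝ V]
    (A : V →L[ℝ] V) (h p : ℝ) (hp : 1 ≤ p)
    (hspec : ∀ z : ℂ,
      (Polynomial.map (algebraMap ℝ ℂ) (LinearMap.charpoly (A : V →ₗ[ℝ] V))).IsRoot z →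
      z.re ≠ h / p) :
    ∃ (Vplus Vminus : Submodule ℝ V) (C η : ℝ), 0 < C ∧ 0 < η ∧
      IsCompl Vplus Vminus ∧
      (∀ x ∈ Vplus, A x ∈ Vplus) ∧ (∀ x ∈ Vminus, A x ∈ Vminus) ∧
      (∀ x ∈ Vplus, ∀ t : ℝ, 0 ≤ t →
        ‖NormedSpace.exp (t • A) x‖ ^ p ≤
          C * Real.exp (-η * t) * Real.exp (h * t) * ‖x‖ ^ p) ∧
      (∀ x ∈ Vminus, ∀ t : ℝ, 0 ≤ t →
        ‖NormedSpace.exp (-t • A) x‖ ^ p ≤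
          C * Real.exp (-η * t) * Real.exp (-h * t) * ‖x‖ ^ p) := by
  have hp0 : 0 < p := one_pos.trans_le hp
  have hχ0 : LinearMap.charpoly (A : V →ₗ[ℝ] V) ≠ 0 := (LinearMap.charpoly_monic _).ne_zero
  obtain ⟨q₁, q₂, hχ, h₁, h₂⟩ := exists_eq_mul_of_roots_re_ne hχ0 hspec
  rw [hχ] at hχ0
  obtain ⟨ν₁, hν₁, K₁, hK₁⟩ :=
    exists_norm_exp_smul_apply_le_of_roots_re_lt A (left_ne_zero_of_mul hχ0) h₁
  obtain ⟨ν₂, hν₂, K₂, hK₂⟩ :=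
    exists_norm_exp_neg_smul_apply_le_of_lt_roots_re A (right_ne_zero_of_mul hχ0) h₂
  set K := max (max K₁ K₂) 1
  set η := p * min (h / p - ν₁) (-(h / p) - ν₂)
  have hK : 0 < K := lt_max_of_lt_right one_pos
  have hc : p * (h / p) = h := mul_div_cancel₀ h hp0.ne'
  have hη₁ : p * ν₁ ≤ h - η := by nlinarith [min_le_left (h / p - ν₁) (-(h / p) - ν₂)]
  have hη₂ : p * ν₂ ≤ -h - η := by nlinarith [min_le_right (h / p - ν₁) (-(h / p) - ν₂)]
  refine ⟨LinearMap.ker (aeval (A : V →ₗ[ℝ] V) q₁), LinearMap.ker (aeval (A : V →ₗ[ℝ] V) q₂),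
    K ^ p, η, Real.rpow_pos_of_pos hK p, mul_pos hp0 (lt_min (sub_pos.2 hν₁) (sub_pos.2 hν₂)),
    isCompl_ker_aeval_of_isCoprime _ (isCoprime_of_roots_re_lt_of_lt_roots_re h₁ h₂)
      (hχ ▸ LinearMap.aeval_self_charpoly _),
    fun _ => apply_mem_ker_aeval _ q₁, fun _ => apply_mem_ker_aeval _ q₂,
    fun x hx t ht => ?_, fun x hx t ht => ?_⟩
  · refine rpow_le_mul_exp_mul_exp (norm_nonneg _) (norm_nonneg _) hK.le hp0.le ht hη₁
      ((hK₁ x hx t ht).trans ?_)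
    gcongr
    exact le_max_of_le_left (le_max_left _ _)
  · refine rpow_le_mul_exp_mul_exp (norm_nonneg _) (norm_nonneg _) hK.le hp0.le ht hη₂
      ((hK₂ x hx t ht).trans ?_)
    gcongr
    exact le_max_of_le_left (le_max_right _ _)
end
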